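/- Let A_1, …, A_N be nonempty finite sets, let π be a strictly positive PMF on the product Π_{j=1}^N A_j, fix an index i, and fix strictly positive PMFs q_j on A_j for every j ≠ i. Define g(a_i) = Σ_{a_{-i}} (Π_{j≠i} q_j(a_j)) · log π(a_i, a_{-i}), where a_{-i} ranges over Π_{j≠i} A_j. Then, over all PMFs p_i on A_i, the Kullback–Leibler divergence KL( p_i ⊗ (⊗_{j≠i} q_j) ‖ π ) is uniquely minimized at q_i*(a_i) = exp(g(a_i)) / Σ_{a_i'∈A_i} exp(g(a_i')). -/

import Mathlib

/-- Kullback–Leibler divergence between finitely supported distributions,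
with the convention `0 · log 0 = 0`. -/
noncomputable def KLdiv {X : Type*} [Fintype X] (p q : X → ℝ) : ℝ :=
  ∑ x, p x * Real.log (p x / q x)

/-- Combine a value `x : A i` with values `c` at all coordinates `j ≠ i`
into a full configuration `(a_i, a_{-i})`. -/
def combine {N : ℕ} {A : Fin N → Type*} (i : Fin N) (x : A i)
    (c : ∀ j : {j : Fin N // j ≠ i}, A j.1) : ∀ j, A j :=
  fun j => if h : j = i then cast (congrArg A h.symm) x else c ⟨j, h⟩

/-- `g(a_i) = ∑_{a_{-i}} (∏_{j≠i} q_j(a_j)) · log π(a_i, a_{-i})`. -/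
noncomputable def mfG {N : ℕ} {A : Fin N → Type*} [∀ j, Fintype (A j)]
    (π : (∀ j, A j) → ℝ) (i : Fin N) (q : ∀ j, A j → ℝ) : A i → ℝ :=
  fun x => ∑ c : ∀ j : {j : Fin N // j ≠ i}, A j.1,
    (∏ j : {j : Fin N // j ≠ i}, q j.1 (c j)) * Real.log (π (combine i x c))

/-- The mean-field coordinate update `q_i*(a_i) = exp(g(a_i)) / ∑_{a_i'} exp(g(a_i'))`. -/
noncomputable def mfStar {N : ℕ} {A : Fin N → Type*} [∀ j, Fintype (A j)]
    (π : (∀ j, A j) → ℝ) (i : Fin N) (q : ∀ j, A j → ℝ) : A i → ℝ :=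
  fun x => Real.exp (mfG π i q x) / ∑ x', Real.exp (mfG π i q x')

/-! Write `a = (a_i, c)` with `c = a_{-i}` and `Q c = ∏_{j ≠ i} q_j (c_j)`. Expanding
`log (p(a_i) Q(c) / π(a))` and summing over `c` first turns the objective into
`KL(p ‖ q*) + ∑_c Q c log Q c - log Z`, where `q* = softmax g` and `Z = ∑ exp g` is its
normaliser. The constant does not involve `p`, so the claim is Gibbs' inequality for
`KL(p ‖ q*)`, which holds termwise: `p log (p/q) - (p - q) = q · klFun (p/q) ≥ 0`, with
equality only at `p = q`.
-/

open Finset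

section Gibbs

open Real InformationTheory

variable {X : Type*} [Fintype X]

lemma mul_log_div_sub_sub_eq_mul_klFun (p : ℝ) {q : ℝ} (hq : 0 < q) :
    p * log (p / q) - (p - q) = q * klFun (p / q) := by
  rw [klFun_apply]
  field_simp
  ring

lemma KLdiv_eq_sum_mul_klFun {p q : X → ℝ} (hq : ∀ x, 0 < q x)
    (hsum : ∑ x, p x = ∑ x, q x) : KLdiv p q = ∑ x, q x * klFun (p x / q x) := by
  have hsub : KLdiv p q = ∑ x, (p x * log (p x / q x) - (p x - q x)) := by
    rw [sum_sub_distrib, sum_sub_distrib, hsum, sub_self, sub_zero, KLdiv]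
  rw [hsub]
  exact sum_congr rfl fun x _ => mul_log_div_sub_sub_eq_mul_klFun (p x) (hq x)

lemma KLdiv_nonneg {p q : X → ℝ} (hp : ∀ x, 0 ≤ p x) (hq : ∀ x, 0 < q x)
    (hsum : ∑ x, p x = ∑ x, q x) : 0 ≤ KLdiv p q := by
  rw [KLdiv_eq_sum_mul_klFun hq hsum]
  exact sum_nonneg fun x _ => mul_nonneg (hq x).le (klFun_nonneg (div_nonneg (hp x) (hq x).le))

lemma KLdiv_eq_zero_iff {p q : X → ℝ} (hp : ∀ x, 0 ≤ p x) (hq : ∀ x, 0 < q x)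
    (hsum : ∑ x, p x = ∑ x, q x) : KLdiv p q = 0 ↔ p = q := by
  have hterm : ∀ x, 0 ≤ q x * klFun (p x / q x) := fun x =>
    mul_nonneg (hq x).le (klFun_nonneg (div_nonneg (hp x) (hq x).le))
  rw [KLdiv_eq_sum_mul_klFun hq hsum, Fintype.sum_eq_zero_iff_of_nonneg hterm, funext_iff,
    funext_iff]
  refine forall_congr' fun x => ?_
  rw [Pi.zero_apply, mul_eq_zero_iff_left (hq x).ne', klFun_eq_zero_iff
    (div_nonneg (hp x) (hq x).le), div_eq_one_iff_eq (hq x).ne']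

end Gibbs

section Softmax

open Real

variable {X : Type*} [Fintype X]

noncomputable def softmax (f : X → ℝ) (x : X) : ℝ :=
  exp (f x) / ∑ y, exp (f y)

variable [Nonempty X] (f : X → ℝ)

lemma sum_exp_pos : 0 < ∑ y, exp (f y) :=
  sum_pos (fun y _ => exp_pos (f y)) univ_nonempty

lemma softmax_pos (x : X) : 0 < softmax f x :=
  div_pos (exp_pos _) (sum_exp_pos f)

lemma sum_softmax : ∑ x, softmax f x = 1 := by
  simp only [softmax]
  rw [← sum_div, div_self (sum_exp_pos f).ne']

lemma log_softmax (x : X) : log (softmax f x) = f x - log (∑ y, exp (f y)) := by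
  rw [softmax, log_div (exp_ne_zero _) (sum_exp_pos f).ne', log_exp]

end Softmax

section ProductDecomposition

open Real

variable {X C : Type*} [Fintype X] [Nonempty X] [Fintype C]

theorem KLdiv_mul_eq_KLdiv_softmax_add {p : X → ℝ} {Q : C → ℝ} {ρ : X × C → ℝ}
    {g : X → ℝ} (hp : ∀ x, 0 ≤ p x) (hpsum : ∑ x, p x = 1) (hQ : ∀ c, 0 < Q c)
    (hQsum : ∑ c, Q c = 1) (hρ : ∀ z, 0 < ρ z)
    (hg : ∀ x, g x = ∑ c, Q c * log (ρ (x, c))) :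
    KLdiv (fun z : X × C => p z.1 * Q z.2) ρ =
      KLdiv p (softmax g) + (∑ c, Q c * log (Q c) - log (∑ y, exp (g y))) := by
  set K := ∑ c, Q c * log (Q c) - log (∑ y, exp (g y))
  have hfiber : ∀ x, ∑ c, p x * Q c * log (p x * Q c / ρ (x, c)) =
      p x * log (p x / softmax g x) + p x * K := by
    intro x
    rcases (hp x).eq_or_lt with hx | hx
    · simp [← hx]
    have hlog : ∀ c, p x * Q c * log (p x * Q c / ρ (x, c)) =
        Q c * (p x * log (p x)) + p x * (Q c * log (Q c)) - p x * (Q c * log (ρ (x, c))) := by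
      intro c
      rw [log_div (mul_pos hx (hQ c)).ne' (hρ _).ne', log_mul hx.ne' (hQ c).ne']
      ring
    rw [sum_congr rfl fun c _ => hlog c, sum_sub_distrib, sum_add_distrib, ← sum_mul, ← mul_sum,
      ← mul_sum, hQsum, ← hg, log_div hx.ne' (softmax_pos g x).ne', log_softmax]
    ring
  calc KLdiv (fun z : X × C => p z.1 * Q z.2) ρ
      = ∑ x, ∑ c, p x * Q c * log (p x * Q c / ρ (x, c)) := Fintype.sum_prod_type _
    _ = ∑ x, (p x * log (p x / softmax g x) + p x * K) := sum_congr rfl fun x _ => hfiber x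
    _ = _ := by rw [sum_add_distrib, ← sum_mul, hpsum, one_mul, KLdiv]

end ProductDecomposition

lemma KLdiv_comp_equiv {X Y : Type*} [Fintype X] [Fintype Y] (e : Y ≃ X) (p q : X → ℝ) :
    KLdiv (p ∘ e) (q ∘ e) = KLdiv p q :=
  e.sum_comp fun x => p x * Real.log (p x / q x)

section Combine

variable {N : ℕ} {A : Fin N → Type*} (i : Fin N)

lemma combine_eq_piSplitAt_symm (x : A i) (c : ∀ j : {j : Fin N // j ≠ i}, A j.1) :
    combine i x c = (Equiv.piSplitAt i A).symm (x, c) := by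
  funext j
  by_cases h : j = i
  · subst h; simp [combine]
  · simp [combine, h]

lemma prod_erase_combine (q : ∀ j, A j → ℝ) (x : A i)
    (c : ∀ j : {j : Fin N // j ≠ i}, A j.1) :
    ∏ j ∈ univ.erase i, q j (combine i x c j) =
      ∏ j : {j : Fin N // j ≠ i}, q j.1 (c j) := by
  rw [prod_subtype (p := (· ≠ i)) (univ.erase i) (fun j => by simp)]
  exact prod_congr rfl fun j _ => by simp only [combine, dif_neg j.2]

lemma KLdiv_mul_prod_erase_eq [∀ j, Fintype (A j)] (p : A i → ℝ) (q : ∀ j, A j → ℝ)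
    (ρ : (∀ j, A j) → ℝ) :
    KLdiv (fun a => p (a i) * ∏ j ∈ univ.erase i, q j (a j)) ρ =
      KLdiv (fun z : A i × ∀ j : {j : Fin N // j ≠ i}, A j.1 =>
          p z.1 * ∏ j : {j : Fin N // j ≠ i}, q j.1 (z.2 j))
        (fun z => ρ (combine i z.1 z.2)) := by
  rw [← KLdiv_comp_equiv (Equiv.piSplitAt i A).symm]
  congr 1 <;> funext ⟨x, c⟩ <;> simp only [Function.comp_apply, ← combine_eq_piSplitAt_symm]
  rw [← prod_erase_combine i q x c]
  simp [combine]

end Combine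

theorem meanField_coordinate_update_general {N : ℕ} (A : Fin N → Type*)
    [∀ j, Fintype (A j)] [∀ j, Nonempty (A j)]
    (π : (∀ j, A j) → ℝ) (hπ : ∀ a, 0 < π a)
    (i : Fin N) (q : ∀ j, A j → ℝ)
    (hq : ∀ j, j ≠ i → ∀ x, 0 < q j x) (hqsum : ∀ j, j ≠ i → ∑ x, q j x = 1) :
    ∀ p : A i → ℝ, (∀ x, 0 ≤ p x) → (∑ x, p x = 1) →
      (KLdiv (fun a => mfStar π i q (a i) * ∏ j ∈ Finset.univ.erase i, q j (a j)) π ≤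
        KLdiv (fun a => p (a i) * ∏ j ∈ Finset.univ.erase i, q j (a j)) π) ∧
      (KLdiv (fun a => p (a i) * ∏ j ∈ Finset.univ.erase i, q j (a j)) π =
        KLdiv (fun a => mfStar π i q (a i) * ∏ j ∈ Finset.univ.erase i, q j (a j)) π →
        p = mfStar π i q) := by
  intro p hp hpsum
  have hQ : ∀ c : ∀ j : {j : Fin N // j ≠ i}, A j.1, 0 < ∏ j, q j.1 (c j) := fun c =>
    prod_pos fun j _ => hq j.1 j.2 (c j)
  have hQsum : ∑ c : ∀ j : {j : Fin N // j ≠ i}, A j.1, ∏ j, q j.1 (c j) = 1 := by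
    rw [← Fintype.prod_sum]
    exact prod_eq_one fun j _ => hqsum j.1 j.2
  have hdecomp := fun (p' : A i → ℝ) (hp' : ∀ x, 0 ≤ p' x) (hp'sum : ∑ x, p' x = 1) =>
    (KLdiv_mul_prod_erase_eq i p' q π).trans <|
      KLdiv_mul_eq_KLdiv_softmax_add hp' hp'sum hQ hQsum (fun _ => hπ _)
        (g := mfG π i q) fun _ => rfl
  have hstar : mfStar π i q = softmax (mfG π i q) := rfl
  have hsum : ∑ x, softmax (mfG π i q) x = ∑ x, p x := (sum_softmax _).trans hpsum.symm
  rw [hstar, hdecomp p hp hpsum, hdecomp _ (fun x => (softmax_pos _ x).le) (sum_softmax _),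
    (KLdiv_eq_zero_iff (fun x => (softmax_pos _ x).le) (softmax_pos _) rfl).2 rfl]
  exact ⟨by linarith [KLdiv_nonneg hp (softmax_pos _) hsum.symm],
    fun h => (KLdiv_eq_zero_iff hp (softmax_pos _) hsum.symm).1 (by linarith)⟩

/-- With `q_j` (`j ≠ i`) fixed strictly positive PMFs, the KL divergence
`KL( p_i ⊗ (⊗_{j≠i} q_j) ‖ π )` over PMFs `p_i` on `A i` is uniquely minimized at
`q_i*(a_i) = exp(g(a_i)) / ∑_{a_i'} exp(g(a_i'))`. -/
theorem meanField_coordinate_update {N : ℕ} (A : Fin N → Type*)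
    [∀ j, Fintype (A j)] [∀ j, Nonempty (A j)]
    (π : (∀ j, A j) → ℝ) (hπ : ∀ a, 0 < π a) (hπsum : ∑ a, π a = 1)
    (i : Fin N) (q : ∀ j, A j → ℝ)
    (hq : ∀ j, j ≠ i → ∀ x, 0 < q j x) (hqsum : ∀ j, j ≠ i → ∑ x, q j x = 1) :
    ∀ p : A i → ℝ, (∀ x, 0 ≤ p x) → (∑ x, p x = 1) →
      (KLdiv (fun a => mfStar π i q (a i) * ∏ j ∈ Finset.univ.erase i, q j (a j)) π ≤
        KLdiv (fun a => p (a i) * ∏ j ∈ Finset.univ.erase i, q j (a j)) π) ∧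
      (KLdiv (fun a => p (a i) * ∏ j ∈ Finset.univ.erase i, q j (a j)) π =
        KLdiv (fun a => mfStar π i q (a i) * ∏ j ∈ Finset.univ.erase i, q j (a j)) π →
        p = mfStar π i q) :=
  meanField_coordinate_update_general A π hπ i q hq hqsum
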